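/- Let C_1, …, C_m > 0 with c_0 = 0, c_k = C_1 + ⋯ + C_k and Γ = c_m, and let a new threshold C > 0 be inserted at position a ∈ {1,…,m+1}, giving C'_a = C, C'_k = C_k for k < a, C'_k = C_{k−1} for k > a, c'_0 = 0, c'_k = C'_1 + ⋯ + C'_k and Γ' = Γ + C. Define importance scores ρ_k = (1/C_k) ∫_{c_{k−1}}^{c_k} f_Γ(c) dc and ρ'_k = (1/C'_k) ∫_{c'_{k−1}}^{c'_k} f_{Γ'}(c) dc. Then: (i) for every old index k with a ≤ k ≤ m, ρ'_{k+1} = ρ_k, i.e., the importance score of every datum ranked below the inserted datum is unchanged; and (ii) for every k < a, ρ'_k ≥ ρ_k, i.e., the importance score of every datum ranked above the inserted datum does not decrease. -/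
import Mathlib


open MeasureTheory

/-- The batch importance function (BIF) derived from a tail importance function `ftail`
with tail length `γ` and total clipping mass `Γ`. -/
noncomputable def BIF (γ : ℝ) (ftail : ℝ → ℝ) (Γ : ℝ) (c : ℝ) : ℝ :=
  if γ ≤ Γ ∧ c ≤ Γ - γ then 1 else ftail (c - (Γ - γ))

lemma BIF_integrable (γ : ℝ) (ftail : ℝ → ℝ) (Γ : ℝ)
    (hint : ∀ a b : ℝ, IntervalIntegrable ftail volume a b) (a b : ℝ) :
    IntervalIntegrable (BIF γ ftail Γ) volume a b := by
  have hg : IntervalIntegrable (fun x => ftail (x - (Γ - γ))) volume a b := by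
    have := (hint (a - (Γ - γ)) (b - (Γ - γ))).comp_sub_right (Γ - γ)
    simpa using this
  by_cases hγΓ : γ ≤ Γ
  · have heq : BIF γ ftail Γ =
        (Set.Iic (Γ - γ)).piecewise (fun _ => (1 : ℝ)) (fun x => ftail (x - (Γ - γ))) := by
      funext x
      by_cases hx : x ≤ Γ - γ <;> simp [BIF, Set.piecewise, hx, hγΓ]
    rw [heq, intervalIntegrable_iff]
    have h1 : Integrable (fun _ : ℝ => (1:ℝ)) (volume.restrict (Set.uIoc a b)) :=
      intervalIntegrable_iff.mp (intervalIntegrable_const (c := (1:ℝ)) (a := a) (b := b))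
    have h2 : Integrable (fun x => ftail (x - (Γ - γ))) (volume.restrict (Set.uIoc a b)) :=
      intervalIntegrable_iff.mp hg
    exact Integrable.piecewise measurableSet_Iic h1.integrableOn h2.integrableOn
  · have heq : BIF γ ftail Γ = fun x => ftail (x - (Γ - γ)) := by
      funext x; simp [BIF, hγΓ]
    rw [heq]; exact hg

lemma BIF_shift (γ : ℝ) (ftail : ℝ → ℝ) (Γ d x : ℝ) (hd : 0 ≤ d) (hx : 0 ≤ x) :
    BIF γ ftail (Γ + d) (x + d) = BIF γ ftail Γ x := by
  unfold BIF
  have harg : x + d - (Γ + d - γ) = x - (Γ - γ) := by ring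
  by_cases h2 : γ ≤ Γ
  · by_cases h3 : x ≤ Γ - γ
    · rw [if_pos ⟨by linarith, by linarith⟩, if_pos ⟨h2, h3⟩]
    · rw [if_neg (fun h => h3 (by linarith [h.2])), if_neg (fun h => h3 h.2), harg]
  · have h3 : ¬ x ≤ Γ - γ := by
      have : Γ < γ := not_le.mp h2
      linarith
    rw [if_neg (fun h => h3 (by linarith [h.2])), if_neg (fun h => h2 h.1), harg]

lemma BIF_mono (γ : ℝ) (hγ : 0 < γ) (ftail : ℝ → ℝ)
    (hanti : AntitoneOn ftail (Set.Icc 0 γ))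
    (hbound : ∀ x ∈ Set.Icc (0 : ℝ) γ, ftail x ∈ Set.Icc (0 : ℝ) 1)
    (Γ d x : ℝ) (hd : 0 ≤ d) (hx0 : 0 ≤ x) (hxΓ : x ≤ Γ) :
    BIF γ ftail Γ x ≤ BIF γ ftail (Γ + d) x := by
  unfold BIF
  by_cases h1 : γ ≤ Γ ∧ x ≤ Γ - γ
  · rw [if_pos h1, if_pos ⟨by linarith [h1.1], by linarith [h1.2]⟩]
  · rw [if_neg h1]
    have harg1 : x - (Γ - γ) ∈ Set.Icc 0 γ := by
      constructor
      · rcases le_or_gt γ Γ with h | h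
        · have hh : ¬ x ≤ Γ - γ := fun hx => h1 ⟨h, hx⟩
          have := not_le.mp hh
          linarith
        · linarith
      · linarith
    by_cases h2 : γ ≤ Γ + d ∧ x ≤ Γ + d - γ
    · rw [if_pos h2]
      exact (hbound _ harg1).2
    · rw [if_neg h2]
      have harg2 : x - (Γ + d - γ) ∈ Set.Icc 0 γ := by
        constructor
        · rcases le_or_gt γ (Γ + d) with h | h
          · have hh : ¬ x ≤ Γ + d - γ := fun hx => h2 ⟨h, hx⟩
            have := not_le.mp hh
            linarith
          · linarith
        · linarith
      exact hanti harg2 harg1 (by linarith)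

/-- How importance scores change under insertion of one datum (0-indexed: old data are
`k = 0, …, m-1`, insertion at position `a ≤ m`): (i) scores of data ranked below the
inserted datum are unchanged; (ii) scores of data ranked above do not decrease. -/
theorem stmt4 (γ : ℝ) (hγ : 0 < γ) (ftail : ℝ → ℝ)
    (hanti : AntitoneOn ftail (Set.Icc 0 γ))
    (hbound : ∀ x ∈ Set.Icc (0 : ℝ) γ, ftail x ∈ Set.Icc (0 : ℝ) 1)
    (hint : ∀ a b : ℝ, IntervalIntegrable ftail volume a b)
    (m : ℕ) (C : ℕ → ℝ) (hC : ∀ k < m, 0 < C k)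
    (Cn : ℝ) (hCn : 0 < Cn) (a : ℕ) (ha : a ≤ m)
    (c : ℕ → ℝ) (hc : ∀ k, c k = ∑ i ∈ Finset.range k, C i)
    (Γ : ℝ) (hΓ : Γ = c m)
    (C' : ℕ → ℝ) (hC' : ∀ k, C' k = if k < a then C k else if k = a then Cn else C (k - 1))
    (c' : ℕ → ℝ) (hc' : ∀ k, c' k = ∑ i ∈ Finset.range k, C' i)
    (Γ' : ℝ) (hΓ' : Γ' = Γ + Cn)
    (ρ : ℕ → ℝ) (hρ : ∀ k, ρ k = (1 / C k) * ∫ x in (c k)..(c (k + 1)), BIF γ ftail Γ x)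
    (ρ' : ℕ → ℝ)
    (hρ' : ∀ k, ρ' k = (1 / C' k) * ∫ x in (c' k)..(c' (k + 1)), BIF γ ftail Γ' x) :
    (∀ k, a ≤ k → k < m → ρ' (k + 1) = ρ k) ∧ (∀ k < a, ρ k ≤ ρ' k) := by
  -- monotonicity of partial sums
  have hmono : ∀ j k, j ≤ k → k ≤ m → c j ≤ c k := by
    intro j k hjk hk
    rw [hc, hc]
    apply Finset.sum_le_sum_of_subset_of_nonneg (Finset.range_subset_range.2 hjk)
    intro i hi _
    exact (hC i (lt_of_lt_of_le (Finset.mem_range.1 hi) hk)).le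
  have hc0 : c 0 = 0 := by simp [hc]
  have hnn : ∀ j, j ≤ m → 0 ≤ c j := fun j hj => hc0 ▸ hmono 0 j (Nat.zero_le _) hj
  have hsucc : ∀ k, c (k + 1) = c k + C k := by
    intro k; rw [hc, hc, Finset.sum_range_succ]
  -- c' agrees with c below a
  have hc'eq : ∀ j, j ≤ a → c' j = c j := by
    intro j hj
    rw [hc', hc]
    apply Finset.sum_congr rfl
    intro i hi
    rw [hC' i, if_pos (lt_of_lt_of_le (Finset.mem_range.1 hi) hj)]
  -- key shift identity for c' above a
  have hkey : ∀ j, a ≤ j → c' (j + 1) = c j + Cn := by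
    intro j hj
    induction j, hj using Nat.le_induction with
    | base =>
      rw [hc', Finset.sum_range_succ, ← hc', hc'eq a le_rfl, hC' a,
        if_neg (lt_irrefl a), if_pos rfl]
    | succ n hn ih =>
      rw [hc', Finset.sum_range_succ, ← hc', ih, hC' (n + 1),
        if_neg (by omega), if_neg (by omega)]
      simp only [Nat.add_sub_cancel]
      rw [hsucc n]; ring
  constructor
  · -- (i)
    intro k hak hkm
    have hC'k : C' (k + 1) = C k := by
      rw [hC' (k + 1), if_neg (by omega), if_neg (by omega)]
      simp
    have h1 : c' (k + 1) = c k + Cn := hkey k hak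
    have h2 : c' (k + 2) = c (k + 1) + Cn := hkey (k + 1) (by omega)
    rw [hρ' (k + 1), hρ k, hC'k, h1, h2]
    congr 1
    rw [← intervalIntegral.integral_comp_add_right (BIF γ ftail Γ') Cn]
    apply intervalIntegral.integral_congr
    intro x hx
    have hle : c k ≤ c (k + 1) := hmono k (k + 1) (by omega) hkm
    rw [Set.uIcc_of_le hle] at hx
    have hx0 : 0 ≤ x := le_trans (hnn k (by omega)) hx.1
    rw [hΓ']
    exact BIF_shift γ ftail Γ Cn x hCn.le hx0
  · -- (ii)
    intro k hka
    have hkm : k < m := lt_of_lt_of_le hka ha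
    have hC'k : C' k = C k := by rw [hC' k, if_pos hka]
    have h1 : c' k = c k := hc'eq k (by omega)
    have h2 : c' (k + 1) = c (k + 1) := hc'eq (k + 1) (by omega)
    rw [hρ k, hρ' k, hC'k, h1, h2]
    have hle : c k ≤ c (k + 1) := hmono k (k + 1) (by omega) hkm
    have hCk := hC k hkm
    apply mul_le_mul_of_nonneg_left _ (by positivity)
    apply intervalIntegral.integral_mono_on hle
      (BIF_integrable γ ftail Γ hint _ _) (BIF_integrable γ ftail Γ' hint _ _)
    intro x hx
    have hx0 : 0 ≤ x := le_trans (hnn k (by omega)) hx.1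
    have hxΓ : x ≤ Γ := le_trans hx.2 (hΓ ▸ hmono (k + 1) m (by omega) le_rfl)
    rw [hΓ']
    exact BIF_mono γ hγ ftail hanti hbound Γ Cn x hCn.le hx0 hxΓ
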